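/- Let U = ℝ² with left-symmetric product e₂·e₁ = e₁, e₂·e₂ = e₁ + e₂ (type b₂), and suppose U* carries a bilinear product with structure constants e₃·e₃ = a₃₃e₃ + b₃₃e₄, e₃·e₄ = a₃₄e₃ + b₃₄e₄, e₄·e₃ = a₄₃e₃ + b₄₃e₄, e₄·e₄ = a₄₄e₃ + b₄₄e₄, where {e₃,e₄} is the dual basis. If the extended product on U ⊕ U* given by (X+α)·(Y+β) = X·Y − Lᵗ_α Y − Lᵗ_X β + α·β has Lie bracket (commutator) satisfying the Jacobi identity, then a₄₄ = 0, b₄₄ = −a₄₃, b₃₄ = −a₃₃ − a₄₃, a₃₄ = 0, a₄₃ = 0, a₃₃ = 0 and b₄₃ = 0. -/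
import Mathlib


/-- The product on the phase space `U ⊕ U*` (coordinates `0,1` for `U` with the
left-symmetric product of type `b₂`: `e₁·e₀ = e₀`, `e₁·e₁ = e₀ + e₁`, and
coordinates `2,3` for `U*` with unknown structure constants
`e₂·e₂ = a₃₃e₂ + b₃₃e₃`, `e₂·e₃ = a₃₄e₂ + b₃₄e₃`, `e₃·e₂ = a₄₃e₂ + b₄₃e₃`,
`e₃·e₃ = a₄₄e₂ + b₄₄e₃`), given by
`(X+α)·(Y+β) = X·Y − Lᵗ_α Y − Lᵗ_X β + α·β`. -/
def phaseMul (a33 b33 a34 b34 a43 b43 a44 b44 : ℝ) (u v : Fin 4 → ℝ) : Fin 4 → ℝ :=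
  ![u 1 * (v 0 + v 1) - u 2 * (a33 * v 0 + b33 * v 1) - u 3 * (a43 * v 0 + b43 * v 1),
    u 1 * v 1 - u 2 * (a34 * v 0 + b34 * v 1) - u 3 * (a44 * v 0 + b44 * v 1),
    -(u 1 * v 2) + a33 * u 2 * v 2 + a34 * u 2 * v 3 + a43 * u 3 * v 2 + a44 * u 3 * v 3,
    -(u 1 * (v 2 + v 3)) + b33 * u 2 * v 2 + b34 * u 2 * v 3 + b43 * u 3 * v 2 + b44 * u 3 * v 3]

set_option maxHeartbeats 2000000 in
/-- If the commutator of the extended product on `U ⊕ U*` satisfies the Jacobi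
identity, then the structure constants of the `U*` product are forced:
`a₄₄ = 0`, `b₄₄ = −a₄₃`, `b₃₄ = −a₃₃ − a₄₃`, `a₃₄ = 0`, `a₄₃ = 0`, `a₃₃ = 0`,
`b₄₃ = 0`. -/
theorem stmt9 (a33 b33 a34 b34 a43 b43 a44 b44 : ℝ)
    (hJac : ∀ u v w : Fin 4 → ℝ,
      (phaseMul a33 b33 a34 b34 a43 b43 a44 b44
          (phaseMul a33 b33 a34 b34 a43 b43 a44 b44 u v
            - phaseMul a33 b33 a34 b34 a43 b43 a44 b44 v u) w
        - phaseMul a33 b33 a34 b34 a43 b43 a44 b44 w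
          (phaseMul a33 b33 a34 b34 a43 b43 a44 b44 u v
            - phaseMul a33 b33 a34 b34 a43 b43 a44 b44 v u))
      + (phaseMul a33 b33 a34 b34 a43 b43 a44 b44
          (phaseMul a33 b33 a34 b34 a43 b43 a44 b44 v w
            - phaseMul a33 b33 a34 b34 a43 b43 a44 b44 w v) u
        - phaseMul a33 b33 a34 b34 a43 b43 a44 b44 u
          (phaseMul a33 b33 a34 b34 a43 b43 a44 b44 v w
            - phaseMul a33 b33 a34 b34 a43 b43 a44 b44 w v))
      + (phaseMul a33 b33 a34 b34 a43 b43 a44 b44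
          (phaseMul a33 b33 a34 b34 a43 b43 a44 b44 w u
            - phaseMul a33 b33 a34 b34 a43 b43 a44 b44 u w) v
        - phaseMul a33 b33 a34 b34 a43 b43 a44 b44 v
          (phaseMul a33 b33 a34 b34 a43 b43 a44 b44 w u
            - phaseMul a33 b33 a34 b34 a43 b43 a44 b44 u w)) = 0) :
    a44 = 0 ∧ b44 = -a43 ∧ b34 = -a33 - a43 ∧ a34 = 0 ∧ a43 = 0 ∧ a33 = 0 ∧ b43 = 0 := by
  have h1 := congrFun (hJac ![1,0,0,0] ![0,1,0,0] ![0,0,1,0]) 1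
  have h2 := congrFun (hJac ![1,0,0,0] ![0,0,1,0] ![0,0,0,1]) 3
  have h3 := congrFun (hJac ![1,0,0,0] ![0,1,0,0] ![0,0,1,0]) 0
  have h4 := congrFun (hJac ![1,0,0,0] ![0,1,0,0] ![0,0,0,1]) 0
  have h5 := congrFun (hJac ![0,1,0,0] ![0,0,1,0] ![0,0,0,1]) 3
  have h6 := congrFun (hJac ![1,0,0,0] ![0,0,1,0] ![0,0,0,1]) 0
  have h7 := congrFun (hJac ![0,1,0,0] ![0,0,1,0] ![0,0,0,1]) 0
  simp [phaseMul] at h1 h2 h3 h4 h5 h6 h7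
  have ha44 : a44 = 0 := h1
  have ha34 : a34 = 0 := by linarith
  have hb44 : b44 = -a43 := by linarith
  have hb34 : b34 = -a33 - a43 := by linarith
  have hb43 : b43 = -2 * a33 := by linarith
  rw [ha34, ha44, hb34, hb43] at h6
  have ha43 : a43 = 0 := by
    have : a43 * a43 = 0 := by linear_combination h6
    exact mul_self_eq_zero.mp this
  rw [ha34, ha43, hb34, hb43, hb44, ha43] at h7
  have ha33 : a33 = 0 := by
    have : a33 * a33 = 0 := by linear_combination h7 / 6
    exact mul_self_eq_zero.mp this
  refine ⟨ha44, by linarith, by linarith, ha34, ha43, ha33, by linarith⟩
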